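/- Let $a, b$ be nonzero real numbers and $\alpha > 1$. Then $1 + \sum_{k=1}^{\infty} \frac{(b/a)^k}{(1-\alpha)(1-\alpha^2)\cdots(1-\alpha^k)} = 0$ if and only if $b = a\alpha^n$ for some positive integer $n$. -/

import Mathlib

/-!
Write `S(c) = ∑ₖ cᵏ / (q; q)ₖ` with `|q| > 1`. Comparing consecutive terms gives the functional
equation `S(c q) = (1 - c) S(c)`, hence `S(c qⁿ) = ∏_{i<n} (1 - c qⁱ) · S(c)`, which is Euler's
product formula in disguise. Taking `c = 1` shows `S(qⁿ) = 0` for `n ≥ 1`. Conversely, the bound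
`|(q; q)ₖ| ≥ (|q| - 1)ᵏ` keeps `S` within `1/2` of `1` near `0`; writing a zero `c` of `S` as
`(c / q^N) q^N` with `N` large, some factor `1 - (c / q^N) qⁱ` must vanish, i.e. `c = q^(N-i)`.
-/

open Finset

section

variable {𝕜 : Type*} [NormedField 𝕜]

/-- The `q`-Pochhammer symbol `(q; q)ₖ`. -/
noncomputable def qPochhammer (q : 𝕜) (k : ℕ) : 𝕜 := ∏ i ∈ range k, (1 - q ^ (i + 1))

noncomputable def eulerSeries (q c : 𝕜) : 𝕜 := ∑' k, c ^ k / qPochhammer q k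

@[simp] lemma qPochhammer_zero (q : 𝕜) : qPochhammer q 0 = 1 := prod_range_zero _

lemma qPochhammer_succ (q : 𝕜) (k : ℕ) :
    qPochhammer q (k + 1) = qPochhammer q k * (1 - q ^ (k + 1)) :=
  prod_range_succ _ _

variable {q : 𝕜}

lemma norm_pow_sub_one_le_norm_one_sub_pow (q : 𝕜) (n : ℕ) : ‖q‖ ^ n - 1 ≤ ‖1 - q ^ n‖ := by
  simpa [norm_pow, norm_sub_rev] using norm_sub_norm_le (q ^ n) 1

lemma norm_sub_one_le_norm_one_sub_pow_succ (hq : 1 < ‖q‖) (i : ℕ) :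
    ‖q‖ - 1 ≤ ‖1 - q ^ (i + 1)‖ :=
  calc ‖q‖ - 1 ≤ ‖q‖ ^ (i + 1) - 1 := by gcongr; exact le_self_pow₀ hq.le (by omega)
    _ ≤ _ := norm_pow_sub_one_le_norm_one_sub_pow q _

lemma pow_le_norm_qPochhammer (hq : 1 < ‖q‖) (k : ℕ) : (‖q‖ - 1) ^ k ≤ ‖qPochhammer q k‖ := by
  rw [qPochhammer, norm_prod]
  calc (‖q‖ - 1) ^ k = ∏ _i ∈ range k, (‖q‖ - 1) := by rw [prod_const, card_range]
    _ ≤ _ := prod_le_prod (fun _ _ ↦ by linarith) fun i _ ↦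
      norm_sub_one_le_norm_one_sub_pow_succ hq i

lemma qPochhammer_ne_zero (hq : 1 < ‖q‖) (k : ℕ) : qPochhammer q k ≠ 0 :=
  norm_pos_iff.mp <| (pow_pos (by linarith) k).trans_le (pow_le_norm_qPochhammer hq k)

lemma norm_eulerTerm_succ_le (hq : 1 < ‖q‖) (c : 𝕜) (k : ℕ) :
    ‖c ^ (k + 1) / qPochhammer q (k + 1)‖ ≤
      ‖c‖ / (‖q‖ ^ (k + 1) - 1) * ‖c ^ k / qPochhammer q k‖ := by
  have hpos : 0 < ‖q‖ ^ (k + 1) - 1 := sub_pos.mpr (one_lt_pow₀ hq k.succ_ne_zero)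
  have hP : 0 < ‖qPochhammer q k‖ := norm_pos_iff.mpr (qPochhammer_ne_zero hq k)
  rw [qPochhammer_succ, pow_succ, norm_div, norm_div, norm_mul, norm_mul, div_mul_div_comm,
    mul_comm ‖c‖, mul_comm (‖q‖ ^ (k + 1) - 1)]
  gcongr
  exact norm_pow_sub_one_le_norm_one_sub_pow q _

variable [CompleteSpace 𝕜]

lemma summable_eulerTerm (hq : 1 < ‖q‖) (c : 𝕜) :
    Summable fun k ↦ c ^ k / qPochhammer q k := by
  refine summable_of_ratio_norm_eventually_le (r := 1 / 2) (by norm_num) ?_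
  obtain ⟨N, hN⟩ := pow_unbounded_of_one_lt (2 * ‖c‖ + 1) hq
  filter_upwards [Filter.eventually_ge_atTop N] with k hk
  refine (norm_eulerTerm_succ_le hq c k).trans (mul_le_mul_of_nonneg_right ?_ (norm_nonneg _))
  have hpow : ‖q‖ ^ N ≤ ‖q‖ ^ (k + 1) := pow_le_pow_right₀ hq.le (by omega)
  rw [div_le_iff₀ (by linarith [norm_nonneg c])]
  linarith

lemma eulerSeries_eq_one_add (hq : 1 < ‖q‖) (c : 𝕜) :
    eulerSeries q c = 1 + ∑' k, c ^ (k + 1) / qPochhammer q (k + 1) := by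
  rw [eulerSeries, (summable_eulerTerm hq c).tsum_eq_zero_add]
  simp

lemma eulerSeries_mul_self (hq : 1 < ‖q‖) (c : 𝕜) :
    eulerSeries q (c * q) = (1 - c) * eulerSeries q c := by
  have hterm (k : ℕ) : (c * q) ^ (k + 1) / qPochhammer q (k + 1) =
      c ^ (k + 1) / qPochhammer q (k + 1) - c * (c ^ k / qPochhammer q k) := by
    have hP := qPochhammer_ne_zero hq (k + 1)
    rw [qPochhammer_succ] at hP ⊢
    have hfactor := right_ne_zero_of_mul hP
    field_simp
    ring
  have hsum := summable_eulerTerm hq c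
  calc eulerSeries q (c * q)
      = 1 + ∑' k, (c ^ (k + 1) / qPochhammer q (k + 1) - c * (c ^ k / qPochhammer q k)) := by
        rw [eulerSeries_eq_one_add hq, tsum_congr hterm]
    _ = 1 + (∑' k, c ^ (k + 1) / qPochhammer q (k + 1) - c * eulerSeries q c) := by
        rw [((summable_nat_add_iff 1).mpr hsum).tsum_sub (hsum.mul_left c), tsum_mul_left,
          eulerSeries]
    _ = (1 - c) * eulerSeries q c := by
        rw [eulerSeries_eq_one_add hq c]
        ring

lemma eulerSeries_mul_pow (hq : 1 < ‖q‖) (c : 𝕜) (n : ℕ) :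
    eulerSeries q (c * q ^ n) = (∏ i ∈ range n, (1 - c * q ^ i)) * eulerSeries q c := by
  induction n with
  | zero => simp
  | succ n ih => rw [pow_succ, ← mul_assoc, eulerSeries_mul_self hq, ih, prod_range_succ]; ring

lemma eulerSeries_ne_zero_of_norm_le (hq : 1 < ‖q‖) {c : 𝕜} (hc : ‖c‖ ≤ (‖q‖ - 1) / 3) :
    eulerSeries q c ≠ 0 := by
  have hq1 : 0 < ‖q‖ - 1 := by linarith
  have hterm (k : ℕ) : ‖c ^ (k + 1) / qPochhammer q (k + 1)‖ ≤ (1 / 3 : ℝ) ^ (k + 1) :=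
    calc ‖c ^ (k + 1) / qPochhammer q (k + 1)‖
        ≤ ((‖q‖ - 1) / 3) ^ (k + 1) / (‖q‖ - 1) ^ (k + 1) := by
          rw [norm_div, norm_pow]
          exact div_le_div₀ (by positivity) (pow_le_pow_left₀ (norm_nonneg _) hc _)
            (by positivity) (pow_le_norm_qPochhammer hq _)
      _ = (1 / 3) ^ (k + 1) := by rw [← div_pow]; field_simp
  have hgeom : HasSum (fun k ↦ (1 / 3 : ℝ) ^ (k + 1)) (1 / 2) := by
    have := (hasSum_geometric_of_lt_one (r := (1 / 3 : ℝ)) (by norm_num) (by norm_num)).mul_left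
      (1 / 3)
    simp only [← pow_succ'] at this
    rwa [show (1 / 2 : ℝ) = 1 / 3 * (1 - 1 / 3)⁻¹ by norm_num]
  have hnear : ‖eulerSeries q c - 1‖ ≤ 1 / 2 := by
    rw [eulerSeries_eq_one_add hq, add_sub_cancel_left]
    exact tsum_of_norm_bounded hgeom hterm
  intro h
  rw [h, zero_sub, norm_neg, norm_one] at hnear
  norm_num at hnear

lemma eulerSeries_eq_zero_iff (hq : 1 < ‖q‖) (c : 𝕜) :
    eulerSeries q c = 0 ↔ ∃ n, 0 < n ∧ c = q ^ n := by
  have hq0 : q ≠ 0 := norm_pos_iff.mp (by linarith)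
  constructor
  · intro h0
    by_contra! hc
    obtain ⟨N, hN⟩ := pow_unbounded_of_one_lt (3 * ‖c‖ / (‖q‖ - 1)) hq
    have hqN : q ^ N ≠ 0 := pow_ne_zero N hq0
    have hsmall : ‖c / q ^ N‖ ≤ (‖q‖ - 1) / 3 := by
      rw [div_lt_iff₀ (by linarith)] at hN
      rw [norm_div, norm_pow, div_le_iff₀ (by positivity)]
      linarith
    have hprod : ∏ i ∈ range N, (1 - c / q ^ N * q ^ i) ≠ 0 := by
      refine prod_ne_zero_iff.mpr fun i hi h ↦ hc (N - i) (by simp at hi; omega) ?_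
      rw [pow_sub₀ q hq0 (mem_range.mp hi).le, eq_mul_inv_iff_mul_eq₀ (pow_ne_zero i hq0)]
      field_simp at h
      linear_combination -h
    have hfactor := eulerSeries_mul_pow hq (c / q ^ N) N
    rw [div_mul_cancel₀ c hqN, h0] at hfactor
    exact eulerSeries_ne_zero_of_norm_le hq hsmall
      ((mul_eq_zero.mp hfactor.symm).resolve_left hprod)
  · rintro ⟨n, hn, rfl⟩
    rw [← one_mul (q ^ n), eulerSeries_mul_pow hq, prod_eq_zero (mem_range.mpr hn) (by simp),
      zero_mul]

end

theorem characteristic_values_general_general (a b : ℝ) (ha : a ≠ 0)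
    (α : ℝ) (hα : 1 < α) :
    1 + ∑' k : ℕ,
      (b / a) ^ (k + 1) / ∏ i ∈ Finset.range (k + 1), (1 - α ^ (i + 1)) = 0 ↔
    ∃ n : ℕ, 0 < n ∧ b = a * α ^ n := by
  have hα' : 1 < ‖α‖ := by rwa [Real.norm_of_nonneg (by linarith)]
  have hseries : 1 + ∑' k : ℕ, (b / a) ^ (k + 1) / ∏ i ∈ Finset.range (k + 1), (1 - α ^ (i + 1))
      = eulerSeries α (b / a) :=
    (eulerSeries_eq_one_add hα' _).symm
  rw [hseries, eulerSeries_eq_zero_iff hα']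
  exact exists_congr fun n ↦ and_congr_right' (by rw [div_eq_iff ha, mul_comm])

/-- For nonzero reals `a, b` and `α > 1`,
`1 + ∑_{k≥1} (b/a)^k / ((1-α)⋯(1-α^k)) = 0` iff `b = a α^n` for some `n ≥ 1`. -/
theorem characteristic_values_general (a b : ℝ) (ha : a ≠ 0) (hb : b ≠ 0)
    (α : ℝ) (hα : 1 < α) :
    1 + ∑' k : ℕ,
      (b / a) ^ (k + 1) / ∏ i ∈ Finset.range (k + 1), (1 - α ^ (i + 1)) = 0 ↔
    ∃ n : ℕ, 0 < n ∧ b = a * α ^ n :=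
  characteristic_values_general_general a b ha α hα
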